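/- arXiv:2012.01090 — 2 statements merged into one kernel-verified Lean document; each statement's English description precedes it below -/
import Mathlib

section
/- Let m_1 ≥ m_2 ≥ 3 and n ≥ 5. (i) If m_1 + m_2 − 1 = n, then ε(C_{m_1,m_2}^n) ≤ ε(U_{n,n−1}^l), with equality if and only if m_1 is even and m_2 = 3. (ii) For every 3 ≤ g ≤ n−2, ε(U_{n,g}^p) ≤ ε(U_{n,g+1}^p), with equality if and only if g is even. -/
open SimpleGraph

/-- The eccentricity of a vertex: maximum distance to any vertex. -/
noncomputable def ecc {V : Type*} (G : SimpleGraph V) (v : V) : ℕ :=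
  ⨆ u, G.dist v u

/-- The total eccentricity index: sum of eccentricities of all vertices. -/
noncomputable def totalEcc {V : Type*} [Fintype V] (G : SimpleGraph V) : ℕ :=
  ∑ v, ecc G v

/-- A pendant vertex: a vertex of degree one, i.e. with exactly one neighbour. -/
def IsPendant {V : Type*} (G : SimpleGraph V) (v : V) : Prop :=
  ∃! u, G.Adj v u

/-- A cut vertex: a vertex whose removal disconnects the graph. -/
def IsCutVertex {V : Type*} (G : SimpleGraph V) (w : V) : Prop :=
  ¬ (G.induce {v | v ≠ w}).Connected

/-- distance between two subgraphs -/
noncomputable def subgraphDist {V : Type*} (G : SimpleGraph V) (B B' : G.Subgraph) : ℕ :=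
  sInf {d | ∃ u ∈ B.verts, ∃ w ∈ B'.verts, G.dist u w = d}

/-- A 2-connected subgraph: at least two vertices, connected, and no cut vertex. -/
def TwoConn {V : Type*} {G : SimpleGraph V} (H : G.Subgraph) : Prop :=
  2 ≤ H.verts.ncard ∧ H.coe.Connected ∧ ∀ w, ¬ IsCutVertex H.coe w

/-- A block: a maximal 2-connected subgraph. -/
def IsBlock {V : Type*} {G : SimpleGraph V} (H : G.Subgraph) : Prop :=
  TwoConn H ∧ ∀ H' : G.Subgraph, H ≤ H' → TwoConn H' → H' = H

/-- A pendant block: a block containing exactly one cut vertex of `G`. -/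
def IsPendantBlock {V : Type*} (G : SimpleGraph V) (H : G.Subgraph) : Prop :=
  ∃! w, w ∈ H.verts ∧ IsCutVertex G w

/-- `G_{k,l}`: the graph obtained from `G` by attaching two new paths,
with `k` resp. `l` new vertices, at the vertex `v`. -/
def attachTwoPaths {V : Type*} (G : SimpleGraph V) (v : V) (k l : ℕ) :
    SimpleGraph (V ⊕ (Fin k ⊕ Fin l)) :=
  SimpleGraph.fromRel (fun p q =>
    match p, q with
    | .inl x, .inl y => G.Adj x y
    | .inl x, .inr (.inl i) => x = v ∧ i.val = 0
    | .inl x, .inr (.inr i) => x = v ∧ i.val = 0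
    | .inr (.inl i), .inr (.inl j) => i.val + 1 = j.val
    | .inr (.inr i), .inr (.inr j) => i.val + 1 = j.val
    | _, _ => False)

/-- The graph obtained from `H1`, `H2` and the path `P_d = v_1 v_2 … v_d` by identifying
`u ∈ V(H1)`, `v ∈ V(H2)` and `v_1` into a single vertex.  The `Fin (d-1)` part records the
path vertices `v_2, …, v_d`. -/
def glueMid {V1 V2 : Type*} (H1 : SimpleGraph V1) (H2 : SimpleGraph V2)
    (u : V1) (v : V2) (d : ℕ) :
    SimpleGraph (V1 ⊕ ({x : V2 // x ≠ v} ⊕ Fin (d - 1))) :=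
  SimpleGraph.fromRel (fun p q =>
    match p, q with
    | .inl x, .inl y => H1.Adj x y
    | .inl x, .inr (.inl y) => x = u ∧ H2.Adj v y.1
    | .inl x, .inr (.inr i) => x = u ∧ i.val = 0
    | .inr (.inl x), .inr (.inl y) => H2.Adj x.1 y.1
    | .inr (.inr i), .inr (.inr j) => i.val + 1 = j.val
    | _, _ => False)

/-- The graph obtained from `H1`, `H2` and the path `P_d = v_1 v_2 … v_d` by identifying
`u ∈ V(H1)` with `v_1` and `v ∈ V(H2)` with `v_d`.  The `Fin (d-1)` part records the path
vertices `v_2, …, v_d` (the last one being identified with `v`). -/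
def glueEnds {V1 V2 : Type*} (H1 : SimpleGraph V1) (H2 : SimpleGraph V2)
    (u : V1) (v : V2) (d : ℕ) :
    SimpleGraph (V1 ⊕ ({x : V2 // x ≠ v} ⊕ Fin (d - 1))) :=
  SimpleGraph.fromRel (fun p q =>
    match p, q with
    | .inl x, .inl y => H1.Adj x y
    | .inl x, .inr (.inr i) => x = u ∧ i.val = 0
    | .inr (.inl x), .inr (.inl y) => H2.Adj x.1 y.1
    | .inr (.inr i), .inr (.inl y) => i.val + 1 = d - 1 ∧ H2.Adj v y.1
    | .inr (.inr i), .inr (.inr j) => i.val + 1 = j.val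
    | _, _ => False)

/-- `U_{n,g}^l`: the unicyclic graph on `n` vertices obtained by joining one end vertex of
the path `P_{n-g}` to a vertex of the cycle `C_g` by an edge. -/
def UnlGraph (n g : ℕ) : SimpleGraph (Fin (n - g) ⊕ Fin g) :=
  SimpleGraph.fromRel (fun p q =>
    match p, q with
    | .inl i, .inl j => i.val + 1 = j.val
    | .inl i, .inr j => i.val + 1 = n - g ∧ j.val = 0
    | .inr i, .inr j => i.val + 1 = j.val ∨ (i.val = 0 ∧ j.val + 1 = g)
    | _, _ => False)

/-- `U_{n,g}^p`: the unicyclic graph on `n` vertices obtained by attaching `n - g` pendant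
vertices to one vertex of the cycle `C_g`. -/
def UnpGraph (n g : ℕ) : SimpleGraph (Fin g ⊕ Fin (n - g)) :=
  SimpleGraph.fromRel (fun p q =>
    match p, q with
    | .inl i, .inl j => i.val + 1 = j.val ∨ (i.val = 0 ∧ j.val + 1 = g)
    | .inl i, .inr _ => i.val = 0
    | _, _ => False)

/-- The graph obtained by joining the vertex `u` of `H` to the pendant vertex of
`U_{r,g}^l` by an edge. -/
def joinPendant {V : Type*} (H : SimpleGraph V) (u : V) (r g : ℕ) :
    SimpleGraph (V ⊕ (Fin (r - g) ⊕ Fin g)) :=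
  SimpleGraph.fromRel (fun p q =>
    match p, q with
    | .inl x, .inl y => H.Adj x y
    | .inl x, .inr (.inl i) => x = u ∧ i.val = 0
    | .inr a, .inr b => (UnlGraph r g).Adj a b
    | _, _ => False)

/-- `C_{m1,m2}^n` in the case `n = m1 + m2 - 1`: two cycles `C_{m1}` and `C_{m2}`
sharing exactly one vertex (the vertex `0`). -/
def twoCyclesGlued (m1 m2 : ℕ) : SimpleGraph (Fin (m1 + m2 - 1)) :=
  SimpleGraph.fromRel (fun i j =>
    (i.val + 1 = j.val ∧ j.val < m1) ∨ (i.val = 0 ∧ j.val + 1 = m1)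
    ∨ (i.val = 0 ∧ j.val = m1) ∨ (m1 ≤ i.val ∧ i.val + 1 = j.val)
    ∨ (i.val = 0 ∧ j.val + 2 = m1 + m2))

/-- `C_{3,3}^n` for `n > 5`: two triangles `{0,1,2}` and `{n-3,n-2,n-1}` joined by the path
`2, 3, …, n-3` (a path on `n - 4` vertices whose ends are identified with a vertex of each
triangle). -/
def C33 (n : ℕ) : SimpleGraph (Fin n) :=
  SimpleGraph.fromRel (fun i j =>
    (i.val = 0 ∧ j.val = 1) ∨ (i.val = 0 ∧ j.val = 2) ∨ (i.val = 1 ∧ j.val = 2)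
    ∨ (2 ≤ i.val ∧ i.val + 1 = j.val ∧ j.val + 3 ≤ n)
    ∨ (i.val + 3 = n ∧ j.val + 2 = n) ∨ (i.val + 2 = n ∧ j.val + 1 = n)
    ∨ (i.val + 3 = n ∧ j.val + 1 = n))

/-- `T(l, m, d)`: the tree obtained from the path `P_d` by attaching `l` pendant vertices at
one end and `m` pendant vertices at the other end. -/
def Tlmd (l m d : ℕ) : SimpleGraph (Fin d ⊕ (Fin l ⊕ Fin m)) :=
  SimpleGraph.fromRel (fun p q =>
    match p, q with
    | .inl i, .inl j => i.val + 1 = j.val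
    | .inl i, .inr (.inl _) => i.val = 0
    | .inl i, .inr (.inr _) => i.val + 1 = d
    | _, _ => False)

/-- `K_m^n(l_1, …, l_m)`: the graph obtained from the complete graph `K_m` by identifying,
for each `i`, one end vertex of a path on `l i` vertices with the `i`-th vertex of `K_m`.
The vertex `⟨i, 0⟩` is the `i`-th vertex of the complete graph. -/
def Kmn (m : ℕ) (l : Fin m → ℕ) : SimpleGraph ((i : Fin m) × Fin (l i)) :=
  SimpleGraph.fromRel (fun p q =>
    (p.1 = q.1 ∧ p.2.val + 1 = q.2.val) ∨ (p.1 ≠ q.1 ∧ p.2.val = 0 ∧ q.2.val = 0))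

/-- The graph obtained from `H`, `C_{m1}` and `C_{m2}` by identifying the vertex `w` of `H`,
a vertex of `C_{m1}` and a vertex of `C_{m2}` into one vertex. -/
def glueTwoCycles {V : Type*} (H : SimpleGraph V) (w : V) (m1 m2 : ℕ) :
    SimpleGraph (V ⊕ (Fin (m1 - 1) ⊕ Fin (m2 - 1))) :=
  SimpleGraph.fromRel (fun p q =>
    match p, q with
    | .inl x, .inl y => H.Adj x y
    | .inl x, .inr (.inl i) => x = w ∧ (i.val = 0 ∨ i.val + 2 = m1)
    | .inl x, .inr (.inr i) => x = w ∧ (i.val = 0 ∨ i.val + 2 = m2)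
    | .inr (.inl i), .inr (.inl j) => i.val + 1 = j.val
    | .inr (.inr i), .inr (.inr j) => i.val + 1 = j.val
    | _, _ => False)

/-- The graph obtained from `H` and the cycle `C_M` by identifying the vertex `w` of `H`
with one vertex of the cycle. -/
def glueOneCycle {V : Type*} (H : SimpleGraph V) (w : V) (M : ℕ) :
    SimpleGraph (V ⊕ Fin (M - 1)) :=
  SimpleGraph.fromRel (fun p q =>
    match p, q with
    | .inl x, .inl y => H.Adj x y
    | .inl x, .inr i => x = w ∧ (i.val = 0 ∨ i.val + 2 = M)
    | .inr i, .inr j => i.val + 1 = j.val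
    | _, _ => False)


/-!
All distances are computed exactly: a potential vanishing at `v` that is `1`-Lipschitz along
edges and bounds the distance from `v` from above is the distance from `v`. In `C_{m1,m2}^n` the
distance is the sum of the cycle distances of the retractions onto the two cycles; in `U_{n,g}^p`
a pendant vertex is one step beyond the vertex `0` of `C_g`. So every eccentricity is explicit,
and the total eccentricities follow from
`∑_{k<m} max(⌊m/2⌋, d_{C_m}(0,k) + c) = m⌊m/2⌋ + c² + (m mod 2)c` for `c ≤ ⌊m/2⌋`.
Since `U_{n,n-1}^l = U_{n,n-1}^p`, the rest is arithmetic: `ε(U_{n,g+1}^p) - ε(U_{n,g}^p)` is `0`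
for even `g` and `n - 2` for odd `g`, and `ε(U_{n,n-1}^l) - ε(C_{m1,m2}^n)` is
`(2⌊m1/2⌋ - 3)(⌊m2/2⌋ - 1)`, or `⌊m2/2⌋(2⌊m1/2⌋ - 1) + 2` when `m1` and `m2` are both odd.
-/

def cycleDist (m p q : ℕ) : ℕ := min (p - q + (q - p)) (m - (p - q + (q - p)))

lemma cycleDist_comm (m p q : ℕ) : cycleDist m p q = cycleDist m q p := by
  unfold cycleDist; omega

lemma cycleDist_le_half (m p q : ℕ) (hp : p < m) (hq : q < m) : cycleDist m p q ≤ m / 2 := by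
  unfold cycleDist; omega

lemma exists_cycleDist_eq_half (m p : ℕ) (hp : p < m) : ∃ q < m, cycleDist m p q = m / 2 := by
  by_cases h : p + m / 2 < m
  · exact ⟨p + m / 2, h, by unfold cycleDist; omega⟩
  · exact ⟨p + m / 2 - m, by omega, by unfold cycleDist; omega⟩

def CycleAdj (m p q : ℕ) : Prop :=
  p + 1 = q ∨ q + 1 = p ∨ (p = 0 ∧ q + 1 = m) ∨ (q = 0 ∧ p + 1 = m)

lemma cycleDist_le_of_cycleAdj {m p q r : ℕ} (hp : p < m) (hq : q < m)
    (h : CycleAdj m q r) : cycleDist m p r ≤ cycleDist m p q + 1 := by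
  unfold CycleAdj at h; unfold cycleDist; omega

lemma card_filter_le_cycleDist (m t : ℕ) (ht : 1 ≤ t) :
    ((Finset.range m).filter (fun k => t ≤ cycleDist m 0 k)).card = m + 1 - 2 * t := by
  have : (Finset.range m).filter (fun k => t ≤ cycleDist m 0 k) = Finset.Icc t (m - t) := by
    ext k
    simp only [Finset.mem_filter, Finset.mem_range, Finset.mem_Icc]
    unfold cycleDist
    omega
  rw [this, Nat.card_Icc]
  omega

lemma sum_max_half_cycleDist (m c : ℕ) (hc : c ≤ m / 2) :
    ∑ k ∈ Finset.range m, max (m / 2) (cycleDist m 0 k + c)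
      = m * (m / 2) + c ^ 2 + m % 2 * c := by
  induction c with
  | zero =>
    simp only [add_zero]
    rw [Finset.sum_congr rfl fun k hk => max_eq_left
      (cycleDist_le_half m 0 k ((Nat.zero_le k).trans_lt (Finset.mem_range.mp hk))
        (Finset.mem_range.mp hk))]
    simp
  | succ c ih =>
    have step : ∀ k ∈ Finset.range m, max (m / 2) (cycleDist m 0 k + (c + 1))
        = max (m / 2) (cycleDist m 0 k + c) + if m / 2 - c ≤ cycleDist m 0 k then 1 else 0 := by
      intro k _
      split_ifs <;> omega
    rw [Finset.sum_congr rfl step, Finset.sum_add_distrib, ih (by omega), Finset.sum_boole,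
      card_filter_le_cycleDist m _ (by omega),
      show m + 1 - 2 * (m / 2 - c) = 2 * c + 1 + m % 2 by omega]
    push_cast
    ring

lemma sum_cycleDist (m : ℕ) :
    ∑ k ∈ Finset.range m, cycleDist m 0 k = (m / 2) ^ 2 + m % 2 * (m / 2) := by
  have h := sum_max_half_cycleDist m (m / 2) le_rfl
  rw [Finset.sum_congr rfl fun k _ => max_eq_right (Nat.le_add_left _ _), Finset.sum_add_distrib,
    Finset.sum_const, Finset.card_range, smul_eq_mul] at h
  omega

namespace SimpleGraph

variable {V : Type*} {G : SimpleGraph V}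

lemma le_length_of_lipschitz (D : V → ℕ) (hD : ∀ x y, G.Adj x y → D y ≤ D x + 1) {u v : V}
    (p : G.Walk u v) : D u ≤ D v + p.length := by
  induction p with
  | nil => simp
  | cons h q ih =>
    have := hD _ _ h.symm
    rw [Walk.length_cons]
    omega

lemma le_edist_of_lipschitz (D : V → ℕ) (hD : ∀ x y, G.Adj x y → D y ≤ D x + 1) {v : V}
    (hv : D v = 0) (u : V) : (D u : ℕ∞) ≤ G.edist v u := by
  by_cases hr : G.Reachable u v
  · obtain ⟨p, hp⟩ := hr.exists_walk_length_eq_edist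
    rw [edist_comm, ← hp, Nat.cast_le]
    simpa [hv] using le_length_of_lipschitz D hD p
  · rw [edist_comm, edist_eq_top_of_not_reachable hr]
    exact le_top

lemma dist_eq_of_lipschitz (D : V → ℕ) (hD : ∀ x y, G.Adj x y → D y ≤ D x + 1) {v : V}
    (hv : D v = 0) (hle : ∀ u, G.edist v u ≤ D u) (u : V) : G.dist v u = D u := by
  rw [dist, le_antisymm (hle u) (le_edist_of_lipschitz D hD hv u)]
  rfl

lemma edist_le_of_chain {m : ℕ} (f : Fin m → V)
    (hf : ∀ i j : Fin m, i.val + 1 = j.val → G.Adj (f i) (f j)) (i j : Fin m) (hij : i ≤ j) :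
    G.edist (f i) (f j) ≤ (j - i : ℕ) := by
  obtain ⟨d, hd⟩ : ∃ d, j.val = i.val + d := ⟨j - i, by omega⟩
  induction d generalizing j with
  | zero => simp [Fin.ext (by omega : j.val = i.val)]
  | succ d ih =>
    let k : Fin m := ⟨i + d, by omega⟩
    calc G.edist (f i) (f j) ≤ G.edist (f i) (f k) + G.edist (f k) (f j) := G.edist_triangle
      _ ≤ (d : ℕ) + 1 := by
          gcongr
          · simpa [k] using ih k (by simp [Fin.le_def, k]) rfl
          · exact (edist_eq_one_iff_adj.mpr (hf k j (by simp [k]; omega))).le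
      _ = (j - i : ℕ) := by rw [hd]; norm_cast; omega

lemma edist_le_cycleDist {m : ℕ} (f : Fin m → V)
    (hf : ∀ i j : Fin m, i.val + 1 = j.val ∨ (i.val + 1 = m ∧ j.val = 0) →
      G.Adj (f i) (f j))
    (i j : Fin m) : G.edist (f i) (f j) ≤ cycleDist m i j := by
  wlog hij : i ≤ j generalizing i j
  · rw [edist_comm, cycleDist_comm]; exact this j i (le_of_not_ge hij)
  have chain := edist_le_of_chain f (fun i j h => hf i j (Or.inl h))
  have hm : 0 < m := i.pos
  let origin : Fin m := ⟨0, hm⟩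
  let last : Fin m := ⟨m - 1, by omega⟩
  have around : G.edist (f i) (f j) ≤ (m - (j - i) : ℕ) :=
    calc G.edist (f i) (f j) ≤ G.edist (f origin) (f i) + G.edist (f last) (f origin)
          + G.edist (f j) (f last) := by
          rw [edist_comm (u := f origin), edist_comm (u := f last), edist_comm (u := f j)]
          exact G.edist_triangle.trans (by gcongr; exact G.edist_triangle)
      _ ≤ (i - 0 : ℕ) + 1 + (m - 1 - j : ℕ) := by
          gcongr
          · exact chain origin i (Nat.zero_le _)
          · exact (edist_eq_one_iff_adj.mpr
              (hf last origin (Or.inr ⟨by simp [last]; omega, rfl⟩))).le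
          · exact chain j last (by simp [Fin.le_def, last]; omega)
      _ = (m - (j - i) : ℕ) := by norm_cast; omega
  unfold cycleDist
  rcases le_total (j.val - i.val) (m - (j.val - i.val)) with h | h
  · rw [min_eq_left (by omega)]
    simpa [Nat.sub_eq_zero_of_le (Fin.le_def.mp hij)] using chain i j hij
  · rw [min_eq_right (by omega)]
    simpa [Nat.sub_eq_zero_of_le (Fin.le_def.mp hij)] using around

lemma Hom.edist_le {W : Type*} {H : SimpleGraph W} (f : G →g H) (u v : V) :
    H.edist (f u) (f v) ≤ G.edist u v := by
  by_cases hr : G.Reachable u v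
  · obtain ⟨p, hp⟩ := hr.exists_walk_length_eq_edist
    rw [← hp, ← p.length_map f]
    exact SimpleGraph.edist_le _
  · rw [edist_eq_top_of_not_reachable hr]
    exact le_top

lemma Iso.dist_eq {W : Type*} {H : SimpleGraph W} (e : G ≃g H) (u v : V) :
    H.dist (e u) (e v) = G.dist u v := by
  have hle : H.edist (e u) (e v) ≤ G.edist u v := e.toHom.edist_le u v
  have hge := e.symm.toHom.edist_le (e u) (e v)
  simp only [RelIso.coe_toRelEmbedding, RelEmbedding.coe_toRelHom, RelIso.symm_apply_apply] at hge
  rw [dist, dist, le_antisymm hle hge]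

end SimpleGraph

lemma ecc_eq_of_forall_le_of_exists {V : Type*} [Finite V] (G : SimpleGraph V) (v : V) (E : ℕ)
    (hle : ∀ u, G.dist v u ≤ E) (hex : ∃ u, G.dist v u = E) : ecc G v = E := by
  obtain ⟨u, hu⟩ := hex
  have : Nonempty V := ⟨u⟩
  exact le_antisymm (ciSup_le hle) (hu ▸ le_ciSup (Set.finite_range _).bddAbove u)

lemma totalEcc_eq_of_iso {V W : Type*} [Fintype V] [Fintype W] {G : SimpleGraph V}
    {H : SimpleGraph W} (e : G ≃g H) : totalEcc G = totalEcc H := by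
  have hecc : ∀ v, ecc H (e v) = ecc G v := fun v => by
    simp only [ecc, ← e.toEquiv.iSup_comp (g := fun u => H.dist (e v) u)]
    simp [e.dist_eq]
  rw [totalEcc, totalEcc, ← e.toEquiv.sum_comp]
  simp [hecc]

section Unp

variable {n g : ℕ}

lemma unpGraph_adj_cycle (hg : 1 < g) (i j : Fin g)
    (h : i.val + 1 = j.val ∨ (i.val + 1 = g ∧ j.val = 0)) :
    (UnpGraph n g).Adj (.inl i) (.inl j) := by
  simp only [UnpGraph, fromRel_adj, ne_eq, Sum.inl.injEq, Fin.ext_iff]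
  omega

lemma unpGraph_adj_pendant (s : Fin (n - g)) (hg : 0 < g) :
    (UnpGraph n g).Adj (.inl ⟨0, hg⟩) (.inr s) := by
  simp [UnpGraph]

lemma unpGraph_dist_inl (hg : 1 < g) (a : Fin g) (u : Fin g ⊕ Fin (n - g)) :
    (UnpGraph n g).dist (.inl a) u
      = Sum.elim (fun i : Fin g => cycleDist g a i) (fun _ => cycleDist g a 0 + 1) u := by
  apply dist_eq_of_lipschitz
  · rintro (i | t) (j | s) h <;> simp [UnpGraph] at h <;>
      simp only [Sum.elim_inl, Sum.elim_inr] <;> unfold cycleDist <;> omega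
  · simp [cycleDist]
  · rintro (i | t)
    · exact edist_le_cycleDist _ (unpGraph_adj_cycle hg) a i
    · have := edist_le_cycleDist _ (unpGraph_adj_cycle (n := n) hg) a ⟨0, by omega⟩
      calc _ ≤ _ := (UnpGraph n g).edist_triangle
        _ ≤ _ := add_le_add this (edist_eq_one_iff_adj.mpr (unpGraph_adj_pendant t (by omega))).le
        _ = _ := by simp

lemma unpGraph_dist_inr (hg : 1 < g) (s : Fin (n - g)) (u : Fin g ⊕ Fin (n - g)) :
    (UnpGraph n g).dist (.inr s) u
      = Sum.elim (fun i : Fin g => cycleDist g 0 i + 1) (fun t => if t = s then 0 else 2) u := by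
  apply dist_eq_of_lipschitz
  · rintro (i | t) (j | s) h <;> simp [UnpGraph] at h <;>
      simp only [Sum.elim_inl, Sum.elim_inr] <;> unfold cycleDist <;> (try split_ifs) <;> omega
  · simp
  · have hub := (edist_eq_one_iff_adj.mpr (unpGraph_adj_pendant s (by omega : 0 < g)).symm).le
    rintro (i | t)
    · have := edist_le_cycleDist _ (unpGraph_adj_cycle (n := n) hg) ⟨0, by omega⟩ i
      calc _ ≤ _ := (UnpGraph n g).edist_triangle
        _ ≤ _ := add_le_add hub this
        _ = _ := by simp [add_comm]
    · simp only [Sum.elim_inr]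
      split_ifs with h
      · simp [h]
      · calc _ ≤ _ := (UnpGraph n g).edist_triangle
          _ ≤ 1 + 1 := add_le_add hub
              (edist_eq_one_iff_adj.mpr (unpGraph_adj_pendant t (by omega))).le
          _ = _ := by norm_num

lemma unpGraph_ecc_inl (hg : 1 < g) (hgn : g < n) (a : Fin g) :
    ecc (UnpGraph n g) (.inl a) = max (g / 2) (cycleDist g a 0 + 1) := by
  apply ecc_eq_of_forall_le_of_exists
  · rintro (i | t) <;> rw [unpGraph_dist_inl hg]
    · exact (cycleDist_le_half g a i a.isLt i.isLt).trans (le_max_left _ _)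
    · exact le_max_right _ _
  · obtain ⟨q, hq, hq_half⟩ := exists_cycleDist_eq_half g a a.isLt
    rcases le_total (g / 2) (cycleDist g a 0 + 1) with h | h
    · exact ⟨.inr ⟨0, by omega⟩, by rw [unpGraph_dist_inl hg, max_eq_right h]; rfl⟩
    · exact ⟨.inl ⟨q, hq⟩, by rw [unpGraph_dist_inl hg, max_eq_left h]; exact hq_half⟩

lemma unpGraph_ecc_inr (hg : 1 < g) (s : Fin (n - g)) :
    ecc (UnpGraph n g) (.inr s) = g / 2 + 1 := by
  apply ecc_eq_of_forall_le_of_exists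
  · rintro (i | t) <;> rw [unpGraph_dist_inr hg]
    · simpa using cycleDist_le_half g 0 i (by omega) i.isLt
    · simp only [Sum.elim_inr]
      split_ifs <;> omega
  · obtain ⟨q, hq, hq_half⟩ := exists_cycleDist_eq_half g 0 (by omega)
    exact ⟨.inl ⟨q, hq⟩, by rw [unpGraph_dist_inr hg, Sum.elim_inl, hq_half]⟩

lemma totalEcc_unpGraph (hg : 1 < g) (hgn : g < n) :
    totalEcc (UnpGraph n g) = g * (g / 2) + 1 + g % 2 + (n - g) * (g / 2 + 1) := by
  rw [totalEcc, Fintype.sum_sum_type]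
  simp only [unpGraph_ecc_inl hg hgn, unpGraph_ecc_inr hg, Finset.sum_const, Finset.card_univ,
    Fintype.card_fin, smul_eq_mul]
  rw [Fin.sum_univ_eq_sum_range (fun k => max (g / 2) (cycleDist g k 0 + 1))]
  simp only [cycleDist_comm g _ 0]
  rw [sum_max_half_cycleDist g 1 (by omega)]
  ring

lemma totalEcc_unpGraph_add_eq (hg : 1 < g) (hgn : g + 1 < n) :
    totalEcc (UnpGraph n g) + (if Even g then 0 else n - 2) = totalEcc (UnpGraph n (g + 1)) := by
  rw [totalEcc_unpGraph hg (by omega), totalEcc_unpGraph (by omega) hgn]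
  obtain ⟨r, rfl⟩ : ∃ r, n = g + 2 + r := ⟨n - (g + 2), by omega⟩
  rw [show g + 2 + r - g = r + 2 by omega, show g + 2 + r - (g + 1) = r + 1 by omega]
  rcases Nat.even_or_odd' g with ⟨h, rfl | rfl⟩
  · simp [Nat.mul_add_div]
    ring
  · rw [if_neg (by simp), show 2 * h + 1 + 2 + r - 2 = 2 * h + r + 1 by omega,
      show 2 * h + 1 + 1 = 2 * (h + 1) by ring]
    simp [Nat.mul_add_div]
    ring

end Unp

def unlGraphIsoUnpGraph (n : ℕ) : UnlGraph n (n - 1) ≃g UnpGraph n (n - 1) where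
  toEquiv := Equiv.sumComm _ _
  map_rel_iff' := by
    rintro (i | i) (j | j) <;> simp [UnlGraph, UnpGraph] <;> omega

lemma totalEcc_unlGraph {n : ℕ} (hn : 3 ≤ n) :
    totalEcc (UnlGraph n (n - 1)) = n * ((n - 1) / 2) + 2 + (n - 1) % 2 := by
  rw [totalEcc_eq_of_iso (unlGraphIsoUnpGraph n), totalEcc_unpGraph (by omega) (by omega),
    show n - (n - 1) = 1 by omega]
  obtain ⟨k, rfl⟩ : ∃ k, n = k + 1 := ⟨n - 1, by omega⟩
  simp only [Nat.add_sub_cancel]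
  ring

section TwoCycles

variable {m1 m2 : ℕ}

/- The labels of a vertex `x` of `C_{m1,m2}` under the retractions onto the first and the second
cycle, which collapse the other cycle onto the shared vertex `0`; the vertices
`m1, …, m1 + m2 - 2` get the labels `1, …, m2 - 1` in `C_{m2}`. -/
def firstCycleLabel (m1 x : ℕ) : ℕ := if x < m1 then x else 0

def secondCycleLabel (m1 x : ℕ) : ℕ := if x < m1 then 0 else x - m1 + 1

lemma firstCycleLabel_lt (h1 : 0 < m1) (z : Fin (m1 + m2 - 1)) : firstCycleLabel m1 z < m1 := by
  unfold firstCycleLabel; split_ifs <;> omega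

lemma secondCycleLabel_lt (h2 : 0 < m2) (z : Fin (m1 + m2 - 1)) : secondCycleLabel m1 z < m2 := by
  have := z.isLt
  unfold secondCycleLabel; split_ifs <;> omega

lemma cycleAdj_label_of_adj (h1 : 0 < m1) (h2 : 0 < m2) (x y : Fin (m1 + m2 - 1))
    (h : (twoCyclesGlued m1 m2).Adj x y) :
    (CycleAdj m1 (firstCycleLabel m1 x) (firstCycleLabel m1 y) ∧
        secondCycleLabel m1 x = secondCycleLabel m1 y) ∨
      (firstCycleLabel m1 x = firstCycleLabel m1 y ∧
        CycleAdj m2 (secondCycleLabel m1 x) (secondCycleLabel m1 y)) := by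
  simp only [twoCyclesGlued, fromRel_adj, ne_eq, Fin.ext_iff] at h
  have := x.isLt
  have := y.isLt
  unfold CycleAdj firstCycleLabel secondCycleLabel
  split_ifs <;> omega

def twoCyclesDist (m1 m2 v u : ℕ) : ℕ :=
  cycleDist m1 (firstCycleLabel m1 v) (firstCycleLabel m1 u) +
    cycleDist m2 (secondCycleLabel m1 v) (secondCycleLabel m1 u)

lemma twoCyclesDist_lipschitz (h1 : 0 < m1) (h2 : 0 < m2) (v x y : Fin (m1 + m2 - 1))
    (h : (twoCyclesGlued m1 m2).Adj x y) :
    twoCyclesDist m1 m2 v y ≤ twoCyclesDist m1 m2 v x + 1 := by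
  unfold twoCyclesDist
  rcases cycleAdj_label_of_adj h1 h2 x y h with ⟨ha, he⟩ | ⟨he, ha⟩
  · rw [he]
    have := cycleDist_le_of_cycleAdj (firstCycleLabel_lt h1 v) (firstCycleLabel_lt h1 x) ha
    omega
  · rw [he]
    have := cycleDist_le_of_cycleAdj (secondCycleLabel_lt h2 v) (secondCycleLabel_lt h2 x) ha
    omega

lemma twoCyclesGlued_edist_le_first (h1 : 1 < m1) (h2 : 0 < m2) (x y : Fin (m1 + m2 - 1))
    (hx : x.val < m1) (hy : y.val < m1) :
    (twoCyclesGlued m1 m2).edist x y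
      ≤ cycleDist m1 (firstCycleLabel m1 x) (firstCycleLabel m1 y) := by
  rw [firstCycleLabel, firstCycleLabel, if_pos hx, if_pos hy]
  refine edist_le_cycleDist (Fin.castLE (by omega)) (fun i j hij => ?_) ⟨x, hx⟩ ⟨y, hy⟩
  simp only [twoCyclesGlued, fromRel_adj, ne_eq, Fin.ext_iff, Fin.val_castLE]
  omega

def secondCycleVertex (h1 : 0 < m1) (k : Fin m2) : Fin (m1 + m2 - 1) :=
  ⟨if k.val = 0 then 0 else m1 + k - 1, by split_ifs <;> omega⟩

lemma secondCycleVertex_secondCycleLabel (h1 : 0 < m1) (h2 : 0 < m2) (z : Fin (m1 + m2 - 1))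
    (hz : z.val = 0 ∨ m1 ≤ z.val) :
    secondCycleVertex h1 ⟨secondCycleLabel m1 z, secondCycleLabel_lt h2 z⟩ = z := by
  ext
  by_cases h : z.val < m1 <;> simp [secondCycleVertex, secondCycleLabel, h] <;> omega

lemma twoCyclesGlued_adj_secondCycleVertex (h1 : 0 < m1) (h2 : 1 < m2) (i j : Fin m2)
    (hij : i.val + 1 = j.val ∨ (i.val + 1 = m2 ∧ j.val = 0)) :
    (twoCyclesGlued m1 m2).Adj (secondCycleVertex h1 i) (secondCycleVertex h1 j) := by
  rw [twoCyclesGlued, fromRel_adj]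
  simp only [ne_eq, Fin.ext_iff, secondCycleVertex]
  -- the edges of the second cycle: `0 — m1`, `m1 + m2 - 2 — 0` and `x — x + 1` for `m1 ≤ x`
  by_cases hi : i.val = 0 <;> by_cases hj : j.val = 0
  · omega
  · rw [if_pos hi, if_neg hj]
    exact ⟨by omega, .inl (by omega)⟩
  · rw [if_neg hi, if_pos hj]
    exact ⟨by omega, .inr (by omega)⟩
  · rw [if_neg hi, if_neg hj]
    exact ⟨by omega, .inl (by omega)⟩

lemma twoCyclesGlued_edist_le_second (h1 : 0 < m1) (h2 : 1 < m2) (x y : Fin (m1 + m2 - 1))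
    (hx : x.val = 0 ∨ m1 ≤ x.val) (hy : y.val = 0 ∨ m1 ≤ y.val) :
    (twoCyclesGlued m1 m2).edist x y
      ≤ cycleDist m2 (secondCycleLabel m1 x) (secondCycleLabel m1 y) := by
  have := edist_le_cycleDist _ (twoCyclesGlued_adj_secondCycleVertex h1 h2)
    ⟨secondCycleLabel m1 x, secondCycleLabel_lt (by omega) x⟩
    ⟨secondCycleLabel m1 y, secondCycleLabel_lt (by omega) y⟩
  rwa [secondCycleVertex_secondCycleLabel h1 (by omega) x hx,
    secondCycleVertex_secondCycleLabel h1 (by omega) y hy] at this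

lemma twoCyclesGlued_edist_le (h1 : 1 < m1) (h2 : 1 < m2) (v u : Fin (m1 + m2 - 1)) :
    (twoCyclesGlued m1 m2).edist v u ≤ twoCyclesDist m1 m2 v u := by
  let hub : Fin (m1 + m2 - 1) := ⟨0, by omega⟩
  have first := twoCyclesGlued_edist_le_first (m2 := m2) h1 (by omega)
  have second := twoCyclesGlued_edist_le_second (m1 := m1) (by omega) h2
  by_cases hv : v.val < m1 <;> by_cases hu : u.val < m1
  · refine (first v u hv hu).trans (Nat.cast_le.mpr ?_)
    simp [twoCyclesDist, secondCycleLabel, hv, hu, cycleDist]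
  · calc _ ≤ _ := (twoCyclesGlued m1 m2).edist_triangle (v := hub)
      _ ≤ _ := add_le_add (first v hub hv h1.le) (second hub u (.inl rfl) (.inr (not_lt.mp hu)))
      _ = _ := by
        norm_cast
        simp [twoCyclesDist, firstCycleLabel, secondCycleLabel, hv, hu, hub,
          show 0 < m1 by omega]
  · calc _ ≤ _ := (twoCyclesGlued m1 m2).edist_triangle (v := hub)
      _ ≤ _ := add_le_add (second v hub (.inr (not_lt.mp hv)) (.inl rfl)) (first hub u h1.le hu)
      _ = _ := by
        norm_cast
        simp [twoCyclesDist, firstCycleLabel, secondCycleLabel, hv, hu, hub,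
          show 0 < m1 by omega, add_comm]
  · refine (second v u (.inr (not_lt.mp hv)) (.inr (not_lt.mp hu))).trans (Nat.cast_le.mpr ?_)
    simp [twoCyclesDist, firstCycleLabel, hv, hu, cycleDist]

lemma twoCyclesGlued_dist (h1 : 1 < m1) (h2 : 1 < m2) (v u : Fin (m1 + m2 - 1)) :
    (twoCyclesGlued m1 m2).dist v u = twoCyclesDist m1 m2 v u :=
  dist_eq_of_lipschitz (fun u : Fin (m1 + m2 - 1) => twoCyclesDist m1 m2 v u)
    (twoCyclesDist_lipschitz (by omega) (by omega) v) (by simp [twoCyclesDist, cycleDist])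
    (twoCyclesGlued_edist_le h1 h2 v) u

lemma twoCyclesGlued_ecc_first (h1 : 1 < m1) (h2 : 1 < m2) (v : Fin (m1 + m2 - 1))
    (hv : v.val < m1) :
    ecc (twoCyclesGlued m1 m2) v = max (m1 / 2) (cycleDist m1 0 v + m2 / 2) := by
  apply ecc_eq_of_forall_le_of_exists
  · intro u
    have := u.isLt
    rw [twoCyclesGlued_dist h1 h2]
    unfold twoCyclesDist firstCycleLabel secondCycleLabel cycleDist
    split_ifs <;> omega
  · rcases le_total (cycleDist m1 0 v + m2 / 2) (m1 / 2) with h | h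
    · obtain ⟨q, hq, hq_half⟩ := exists_cycleDist_eq_half m1 v hv
      refine ⟨⟨q, by omega⟩, ?_⟩
      rw [twoCyclesGlued_dist h1 h2]
      dsimp only
      unfold twoCyclesDist firstCycleLabel secondCycleLabel cycleDist at *
      split_ifs
      omega
    · obtain ⟨q, hq, hq_half⟩ := exists_cycleDist_eq_half m2 0 (by omega)
      have hq0 : q ≠ 0 := by rintro rfl; unfold cycleDist at hq_half; omega
      refine ⟨⟨m1 + q - 1, by omega⟩, ?_⟩
      rw [twoCyclesGlued_dist h1 h2]
      dsimp only
      unfold twoCyclesDist firstCycleLabel secondCycleLabel cycleDist at *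
      split_ifs <;> omega

lemma twoCyclesGlued_ecc_second (h2 : 1 < m2) (h12 : m2 ≤ m1) (v : Fin (m1 + m2 - 1))
    (hv : m1 ≤ v.val) :
    ecc (twoCyclesGlued m1 m2) v = cycleDist m2 0 (v - m1 + 1) + m1 / 2 := by
  have h1 : 1 < m1 := by omega
  have := v.isLt
  apply ecc_eq_of_forall_le_of_exists
  · intro u
    have := u.isLt
    rw [twoCyclesGlued_dist h1 h2]
    unfold twoCyclesDist firstCycleLabel secondCycleLabel cycleDist
    split_ifs <;> omega
  · obtain ⟨q, hq, hq_half⟩ := exists_cycleDist_eq_half m1 0 (by omega)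
    refine ⟨⟨q, by omega⟩, ?_⟩
    rw [twoCyclesGlued_dist h1 h2]
    dsimp only
    unfold twoCyclesDist firstCycleLabel secondCycleLabel cycleDist at *
    split_ifs <;> omega

lemma totalEcc_twoCyclesGlued (h2 : 1 < m2) (h12 : m2 ≤ m1) :
    totalEcc (twoCyclesGlued m1 m2)
      = (m1 + m2 - 1) * (m1 / 2) + 2 * (m2 / 2) ^ 2 + (m1 % 2 + m2 % 2) * (m2 / 2) := by
  let F k := if k < m1 then max (m1 / 2) (cycleDist m1 0 k + m2 / 2)
    else cycleDist m2 0 (k - m1 + 1) + m1 / 2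
  have hF : totalEcc (twoCyclesGlued m1 m2) = ∑ k ∈ Finset.range (m1 + (m2 - 1)), F k := by
    rw [show m1 + (m2 - 1) = m1 + m2 - 1 by omega, totalEcc, ← Fin.sum_univ_eq_sum_range]
    refine Finset.sum_congr rfl fun v _ => ?_
    by_cases hv : v.val < m1
    · simp only [F, if_pos hv, twoCyclesGlued_ecc_first (by omega) h2 v hv]
    · simp only [F, if_neg hv, twoCyclesGlued_ecc_second h2 h12 v (not_lt.mp hv)]
  have hfirst :
      ∑ k ∈ Finset.range m1, F k = m1 * (m1 / 2) + (m2 / 2) ^ 2 + m1 % 2 * (m2 / 2) := by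
    rw [← sum_max_half_cycleDist m1 (m2 / 2) (by omega)]
    exact Finset.sum_congr rfl fun k hk => if_pos (Finset.mem_range.mp hk)
  have hsecond : ∑ i ∈ Finset.range (m2 - 1), F (m1 + i)
      = (m2 - 1) * (m1 / 2) + (m2 / 2) ^ 2 + m2 % 2 * (m2 / 2) := by
    have hshift : ∑ i ∈ Finset.range (m2 - 1), cycleDist m2 0 (i + 1)
        = ∑ k ∈ Finset.range m2, cycleDist m2 0 k := by
      have := Finset.sum_range_succ' (fun k => cycleDist m2 0 k) (m2 - 1)
      rw [Nat.sub_add_cancel (by omega)] at this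
      rw [this, show cycleDist m2 0 0 = 0 by simp [cycleDist], add_zero]
    simp only [F, if_neg (Nat.not_lt.mpr (Nat.le_add_right m1 _)), Nat.add_sub_cancel_left,
      Finset.sum_add_distrib, hshift, sum_cycleDist, Finset.sum_const, Finset.card_range,
      smul_eq_mul]
    ring
  rw [hF, Finset.sum_range_add, hfirst, hsecond, show m1 + m2 - 1 = m1 + (m2 - 1) by omega]
  ring

lemma exists_totalEcc_twoCyclesGlued_add_eq (h2 : 3 ≤ m2) (h12 : m2 ≤ m1) :
    ∃ d, totalEcc (twoCyclesGlued m1 m2) + d = totalEcc (UnlGraph (m1 + m2 - 1) (m1 + m2 - 1 - 1))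
      ∧ (d = 0 ↔ Even m1 ∧ m2 = 3) := by
  rw [totalEcc_twoCyclesGlued (by omega) h12, totalEcc_unlGraph (by omega),
    show m1 + m2 - 1 - 1 = m1 + m2 - 2 by omega]
  rcases Nat.even_or_odd' m1 with ⟨a, rfl | rfl⟩ <;>
    rcases Nat.even_or_odd' m2 with ⟨b, rfl | rfl⟩
  · obtain ⟨b, rfl⟩ : ∃ c, b = c + 2 := ⟨b - 2, by omega⟩
    obtain ⟨a, rfl⟩ : ∃ d, a = b + 2 + d := ⟨a - (b + 2), by omega⟩
    refine ⟨(2 * a + 2 * b + 1) * (b + 1), ?_, by simp; omega⟩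
    rw [show 2 * (b + 2 + a) + 2 * (b + 2) - 1 = 4 * b + 2 * a + 7 by omega,
      show 2 * (b + 2 + a) + 2 * (b + 2) - 2 = 2 * (2 * b + a + 3) by omega]
    simp
    ring
  · obtain ⟨b, rfl⟩ : ∃ c, b = c + 1 := ⟨b - 1, by omega⟩
    obtain ⟨a, rfl⟩ : ∃ d, a = b + 2 + d := ⟨a - (b + 2), by omega⟩
    refine ⟨(2 * a + 2 * b + 1) * b, ?_, by simp⟩
    rw [show 2 * (b + 2 + a) + (2 * (b + 1) + 1) - 1 = 2 * (2 * b + a + 3) by omega,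
      show 2 * (b + 2 + a) + (2 * (b + 1) + 1) - 2 = 2 * (2 * b + a + 2) + 1 by omega]
    simp [Nat.mul_add_div]
    ring
  · obtain ⟨b, rfl⟩ : ∃ c, b = c + 2 := ⟨b - 2, by omega⟩
    obtain ⟨a, rfl⟩ : ∃ d, a = b + 2 + d := ⟨a - (b + 2), by omega⟩
    refine ⟨(2 * a + 2 * b + 1) * (b + 1), ?_, by simp⟩
    rw [show 2 * (b + 2 + a) + 1 + 2 * (b + 2) - 1 = 2 * (2 * b + a + 4) by omega,
      show 2 * (b + 2 + a) + 1 + 2 * (b + 2) - 2 = 2 * (2 * b + a + 3) + 1 by omega]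
    simp [Nat.mul_add_div]
    ring
  · obtain ⟨b, rfl⟩ : ∃ c, b = c + 1 := ⟨b - 1, by omega⟩
    obtain ⟨a, rfl⟩ : ∃ d, a = b + 1 + d := ⟨a - (b + 1), by omega⟩
    refine ⟨(b + 1) * (2 * a + 2 * b + 1) + 2, ?_, by simp⟩
    rw [show 2 * (b + 1 + a) + 1 + (2 * (b + 1) + 1) - 1 = 2 * (2 * b + a + 2) + 1 by omega,
      show 2 * (b + 1 + a) + 1 + (2 * (b + 1) + 1) - 2 = 2 * (2 * b + a + 2) by omega]
    simp [Nat.mul_add_div]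
    ring

end TwoCycles

lemma le_and_eq_iff_of_add_eq {A B d : ℕ} {P : Prop} (h : A + d = B) (hP : d = 0 ↔ P) :
    A ≤ B ∧ (A = B ↔ P) :=
  ⟨h ▸ Nat.le_add_right A d, by rw [← hP]; omega⟩

theorem stmt17_general (m1 m2 n : ℕ) (h2 : 3 ≤ m2) (h12 : m2 ≤ m1) :
    ((m1 + m2 - 1 = n) →
      (totalEcc (twoCyclesGlued m1 m2) ≤ totalEcc (UnlGraph n (n - 1)) ∧
       (totalEcc (twoCyclesGlued m1 m2) = totalEcc (UnlGraph n (n - 1)) ↔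
         Even m1 ∧ m2 = 3))) ∧
    (∀ g, 3 ≤ g → g ≤ n - 2 →
      (totalEcc (UnpGraph n g) ≤ totalEcc (UnpGraph n (g + 1)) ∧
       (totalEcc (UnpGraph n g) = totalEcc (UnpGraph n (g + 1)) ↔ Even g))) := by
  refine ⟨fun hn => ?_, fun g hg hgn => ?_⟩
  · subst hn
    obtain ⟨d, hd, hd_zero⟩ := exists_totalEcc_twoCyclesGlued_add_eq h2 h12
    exact le_and_eq_iff_of_add_eq hd hd_zero
  · refine le_and_eq_iff_of_add_eq (totalEcc_unpGraph_add_eq (by omega) (by omega)) ?_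
    split_ifs with he
    · simp [he]
    · simp only [he, iff_false]
      omega

theorem stmt17 (m1 m2 n : ℕ) (h2 : 3 ≤ m2) (h12 : m2 ≤ m1) (hn : 5 ≤ n) :
    ((m1 + m2 - 1 = n) →
      (totalEcc (twoCyclesGlued m1 m2) ≤ totalEcc (UnlGraph n (n - 1)) ∧
       (totalEcc (twoCyclesGlued m1 m2) = totalEcc (UnlGraph n (n - 1)) ↔
         Even m1 ∧ m2 = 3))) ∧
    (∀ g, 3 ≤ g → g ≤ n - 2 →
      (totalEcc (UnpGraph n g) ≤ totalEcc (UnpGraph n (g + 1)) ∧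
       (totalEcc (UnpGraph n g) = totalEcc (UnpGraph n (g + 1)) ↔ Even g))) :=
  stmt17_general m1 m2 n h2 h12
end

section
/- Let n ≥ 5 and let G be a connected graph on n vertices with exactly n−3 cut vertices. Then ε(G) ≤ ε(U_{n,3}^l) = ⌊(3n² − 4n − 3)/4⌋. -/
open SimpleGraph

/-!
Only three vertices `u, w, z` of `G` are not cut vertices, and a vertex farthest from any
given vertex is never a cut vertex, so every eccentricity is attained at one of them. Order
them so that `D = d(u, w)` is their largest mutual distance and `d(w, z) ≤ d(u, z)`. A cut
vertex `v` separates two of them, and distances add up through `v`; this gives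
`e(v) ≤ max (d(u, v), D - d(u, v))` for every `v`. Every level `{v | d(u, v) = j}`,
`0 ≤ j ≤ D`, is nonempty, hence `ε(G) ≤ ε(P_{D+1}) + (n - D - 1) D`, a bound increasing in
`D`. Finally `D ≤ n - 2`: otherwise all levels are singletons and `z` would lie on every
`u`–`w` walk. For `D = n - 2` the bound is `ε(U_{n,3}^l)`, whose vertices along the path
`P_{n-1}` through it have eccentricities `max (j, n - 2 - j)` and whose last vertex has `n - 2`.
-/

namespace SimpleGraph

variable {V : Type*} {G : SimpleGraph V}

def Separates (G : SimpleGraph V) (v x y : V) : Prop :=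
  ∀ W : G.Walk x y, v ∈ W.support

lemma not_separates_iff {v x y : V} : ¬ G.Separates v x y ↔ ∃ W : G.Walk x y, v ∉ W.support :=
  not_forall

lemma separates_right (v x : V) : G.Separates v x v := fun W => W.end_mem_support

lemma not_separates_self {v x : V} (hx : x ≠ v) : ¬ G.Separates v x x :=
  not_separates_iff.2 ⟨.nil, by simpa using hx.symm⟩

lemma Separates.symm {v x y : V} (h : G.Separates v x y) : G.Separates v y x := fun W => by
  simpa using h W.reverse

lemma Separates.separates_or {v x y : V} (h : G.Separates v x y) (z : V) :
    G.Separates v x z ∨ G.Separates v z y := by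
  by_contra! hxzy
  obtain ⟨⟨W₁, h₁⟩, ⟨W₂, h₂⟩⟩ := And.imp not_separates_iff.1 not_separates_iff.1 hxzy
  exact (Walk.mem_support_append_iff _ _).1 (h (W₁.append W₂)) |>.elim h₁ h₂

lemma dist_add_dist_le_length {x y t : V} (W : G.Walk x y) (ht : t ∈ W.support) :
    G.dist x t + G.dist t y ≤ W.length := by
  classical
  rw [← W.take_spec ht, Walk.length_append]
  exact add_le_add (dist_le _) (dist_le _)

lemma Separates.dist_eq (hG : G.Connected) {v x y : V} (h : G.Separates v x y) :
    G.dist x y = G.dist x v + G.dist v y := by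
  obtain ⟨W, hW⟩ := hG.exists_walk_length_eq_dist x y
  exact le_antisymm hG.dist_triangle (hW ▸ dist_add_dist_le_length W (h W))

lemma isCutVertex_of_separates {v x y : V} (hx : x ≠ v) (hy : y ≠ v) (h : G.Separates v x y) :
    IsCutVertex G v := by
  intro hconn
  obtain ⟨W⟩ := hconn.preconnected ⟨x, hx⟩ ⟨y, hy⟩
  have hv : v ∈ (W.map (Embedding.induce {a | a ≠ v}).toHom).support := h _
  obtain ⟨a, -, ha⟩ := List.mem_map.1 (Walk.support_map _ W ▸ hv)
  exact a.2 ha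

lemma IsCutVertex.exists_separates {v x : V} (h : IsCutVertex G v) (hx : x ≠ v) :
    ∃ y, y ≠ v ∧ G.Separates v x y := by
  have hnp : ¬ (G.induce {a | a ≠ v}).Preconnected := fun hp =>
    h (@Connected.mk _ _ hp ⟨⟨x, hx⟩⟩)
  simp only [Preconnected, not_forall] at hnp
  obtain ⟨a, b, hab⟩ := hnp
  obtain ⟨y, hy⟩ : ∃ y, ¬ (G.induce {a | a ≠ v}).Reachable ⟨x, hx⟩ y := by
    by_contra! hall
    exact hab ((hall a).symm.trans (hall b))
  refine ⟨y, y.2, fun W => ?_⟩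
  by_contra hW
  exact hy ⟨W.induce {a | a ≠ v} fun z hz hzv => hW (hzv ▸ hz)⟩

lemma isCutVertex_of_subsingleton [Subsingleton V] (v : V) : IsCutVertex G v :=
  fun h => h.nonempty.elim fun x => x.2 (Subsingleton.elim _ _)

lemma exists_dist_lt_of_isCutVertex (hG : G.Connected) {t s : V} (hts : t ≠ s)
    (hs : IsCutVertex G s) : ∃ y, ¬ G.Separates t s y ∧ G.dist t s < G.dist t y := by
  obtain ⟨y, hys, hsep⟩ := hs.exists_separates hts
  have hty := hsep.dist_eq hG
  have hsy := hG.pos_dist_of_ne hys.symm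
  refine ⟨y, fun hsep' => ?_, by omega⟩
  -- a shortest `s`–`y` walk through `t` would be longer than `d(s, y)` by `2 d(s, t)`
  obtain ⟨W, hW⟩ := hG.exists_walk_length_eq_dist s y
  have hsty := dist_add_dist_le_length W (hsep' W)
  have hst := hG.pos_dist_of_ne hts.symm
  have := G.dist_comm (u := s) (v := t)
  omega

lemma not_isCutVertex_of_forall_dist_le [Nontrivial V] (hG : G.Connected) {v t : V}
    (hmax : ∀ u, G.dist v u ≤ G.dist v t) : ¬ IsCutVertex G t := by
  intro ht
  have hvt : v ≠ t := by
    rintro rfl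
    obtain ⟨u, hu⟩ := exists_ne v
    have := hmax u
    have := hG.pos_dist_of_ne hu.symm
    rw [dist_self] at *
    omega
  obtain ⟨y, -, hy⟩ := exists_dist_lt_of_isCutVertex hG hvt ht
  exact (hmax y).not_gt hy

lemma exists_not_isCutVertex_not_separates [Finite V] (hG : G.Connected) {t x : V} (hx : x ≠ t) :
    ∃ s, ¬ IsCutVertex G s ∧ ¬ G.Separates t x s := by
  obtain ⟨s, hs, hmax⟩ := Set.exists_max_image {s | ¬ G.Separates t x s} (G.dist t)
    (Set.toFinite _) ⟨x, not_separates_self hx⟩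
  refine ⟨s, fun hcut => ?_, hs⟩
  have hts : t ≠ s := by
    rintro rfl
    exact hs (separates_right t x)
  obtain ⟨y, hsy, hlt⟩ := exists_dist_lt_of_isCutVertex hG hts hcut
  have hxy : ¬ G.Separates t x y := fun h => (h.separates_or s).elim hs hsy
  exact (hmax y hxy).not_gt hlt

lemma IsCutVertex.exists_not_isCutVertex_separates [Finite V] (hG : G.Connected) {v x : V}
    (hv : IsCutVertex G v) (hx : x ≠ v) : ∃ y, ¬ IsCutVertex G y ∧ G.Separates v x y := by
  obtain ⟨y₀, hy₀, hsep⟩ := hv.exists_separates hx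
  obtain ⟨y, hy, hy₀y⟩ := exists_not_isCutVertex_not_separates hG hy₀
  exact ⟨y, hy, (hsep.separates_or y).resolve_right fun h => hy₀y h.symm⟩

lemma dist_le_ecc [Finite V] (v u : V) : G.dist v u ≤ ecc G v :=
  le_ciSup (Set.finite_range _).bddAbove u

lemma ecc_le_of_forall_dist_le {v : V} {m : ℕ} (h : ∀ u, G.dist v u ≤ m) : ecc G v ≤ m :=
  have : Nonempty V := ⟨v⟩
  ciSup_le h

lemma exists_not_isCutVertex_ecc_eq_dist [Finite V] [Nontrivial V] (hG : G.Connected) (v : V) :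
    ∃ t, ¬ IsCutVertex G t ∧ ecc G v = G.dist v t := by
  obtain ⟨t, ht⟩ := Finite.exists_max (G.dist v)
  exact ⟨t, not_isCutVertex_of_forall_dist_le hG ht,
    le_antisymm (ecc_le_of_forall_dist_le ht) (dist_le_ecc v t)⟩

section ThreeNonCut

variable [Finite V] {u w z : V}

lemma dist_le_max_of_isCutVertex (hG : G.Connected)
    (hnoncut : ∀ t, ¬ IsCutVertex G t ↔ t = u ∨ t = w ∨ t = z)
    (huz : G.dist u z ≤ G.dist u w) (hwz : G.dist w z ≤ G.dist u z) {v : V}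
    (hv : IsCutVertex G v) :
    G.dist v w ≤ max (G.dist u v) (G.dist u w - G.dist u v) ∧
      G.dist v z ≤ max (G.dist u v) (G.dist u w - G.dist u v) := by
  have hu : u ≠ v := fun h => (hnoncut u).2 (Or.inl rfl) (h ▸ hv)
  obtain ⟨y, hy, huy⟩ := hv.exists_not_isCutVertex_separates hG hu
  have hcases : G.Separates v u w ∧ (G.Separates v u z ∨ G.Separates v z w) ∨
      G.Separates v u z ∧ G.Separates v w z := by
    rcases (hnoncut y).1 hy with rfl | rfl | rfl
    · exact absurd huy (not_separates_self hu)
    · exact Or.inl ⟨huy, huy.separates_or z⟩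
    · rcases huy.separates_or w with huw | hwy
      · exact Or.inl ⟨huw, huw.separates_or y⟩
      · exact Or.inr ⟨huy, hwy⟩
  have := G.dist_comm (u := v) (v := u)
  have := G.dist_comm (u := v) (v := w)
  have := G.dist_comm (u := v) (v := z)
  have := G.dist_comm (u := w) (v := z)
  rcases hcases with ⟨h₁, h₂ | h₂⟩ | ⟨h₁, h₂⟩ <;>
  · have := h₁.dist_eq hG
    have := h₂.dist_eq hG
    omega

theorem ecc_le_max_dist (hG : G.Connected)
    (hnoncut : ∀ t, ¬ IsCutVertex G t ↔ t = u ∨ t = w ∨ t = z)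
    (huz : G.dist u z ≤ G.dist u w) (hwz : G.dist w z ≤ G.dist u z) (v : V) :
    ecc G v ≤ max (G.dist u v) (G.dist u w - G.dist u v) := by
  have : Nontrivial V := not_subsingleton_iff_nontrivial.1 fun _ =>
    (hnoncut u).2 (Or.inl rfl) (isCutVertex_of_subsingleton u)
  have hbound : G.dist v w ≤ max (G.dist u v) (G.dist u w - G.dist u v) ∧
      G.dist v z ≤ max (G.dist u v) (G.dist u w - G.dist u v) := by
    by_cases hv : IsCutVertex G v
    · exact dist_le_max_of_isCutVertex hG hnoncut huz hwz hv
    · have := G.dist_comm (u := z) (v := w)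
      rcases (hnoncut v).1 hv with rfl | rfl | rfl <;> simp only [dist_self] <;> omega
  obtain ⟨t, ht, hecc⟩ := exists_not_isCutVertex_ecc_eq_dist hG v
  rw [hecc]
  rcases (hnoncut t).1 ht with rfl | rfl | rfl
  · exact dist_comm.trans_le (le_max_left _ _)
  · exact hbound.1
  · exact hbound.2

end ThreeNonCut

lemma exists_walk_length_eq_of_adj_succ (f : ℕ → V) {i j : ℕ} (hij : i ≤ j)
    (hf : ∀ k, i ≤ k → k < j → G.Adj (f k) (f (k + 1))) :
    ∃ W : G.Walk (f i) (f j), W.length = j - i := by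
  induction j, hij using Nat.le_induction with
  | base => exact ⟨.nil, by simp⟩
  | succ j hij ih =>
    obtain ⟨W, hW⟩ := ih fun k hik hkj => hf k hik (by omega)
    exact ⟨W.concat (hf j hij (by omega)), by simp [hW]; omega⟩

lemma apply_le_apply_add_length (φ : V → ℕ) (hφ : ∀ a b, G.Adj a b → φ b ≤ φ a + 1) {a b : V}
    (W : G.Walk a b) : φ b ≤ φ a + W.length := by
  induction W with
  | nil => simp
  | cons hxy _ ih =>
    have := hφ _ _ hxy
    simp only [Walk.length_cons]
    omega

lemma apply_le_apply_add_dist (φ : V → ℕ) (hφ : ∀ a b, G.Adj a b → φ b ≤ φ a + 1) {a b : V}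
    (h : G.Reachable a b) : φ b ≤ φ a + G.dist a b := by
  obtain ⟨W, hW⟩ := h.exists_walk_length_eq_dist
  exact hW ▸ apply_le_apply_add_length φ hφ W

lemma exists_mem_support_dist_eq (u : V) {a b : V} (W : G.Walk a b) {j : ℕ}
    (ha : G.dist u a ≤ j) (hb : j ≤ G.dist u b) : ∃ x ∈ W.support, G.dist u x = j := by
  induction W with
  | nil => exact ⟨_, Walk.start_mem_support _, le_antisymm ha hb⟩
  | @cons x y _ hxy _ ih =>
    by_cases hx : G.dist u x = j
    · exact ⟨x, Walk.start_mem_support _, hx⟩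
    · have := hxy.diff_dist_adj (u := u)
      obtain ⟨v, hv, hvj⟩ := ih (by omega) hb
      exact ⟨v, by simp [hv], hvj⟩

lemma exists_injective_dist_eq (u w : V) :
    ∃ f : Fin (G.dist u w + 1) → V, Function.Injective f ∧ ∀ j, G.dist u (f j) = j := by
  have hlevel (j : Fin (G.dist u w + 1)) : ∃ x, G.dist u x = j := by
    rcases Nat.eq_zero_or_pos (G.dist u w) with h | h
    · exact ⟨u, by simp; omega⟩
    · obtain ⟨W, -⟩ := exists_walk_of_dist_ne_zero h.ne'
      obtain ⟨x, -, hx⟩ := exists_mem_support_dist_eq u W (by simp) (Nat.lt_succ_iff.1 j.2)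
      exact ⟨x, hx⟩
  choose f hf using hlevel
  exact ⟨f, fun i j hij => Fin.ext (by rw [← hf i, ← hf j, hij]), hf⟩

theorem dist_add_two_le_card [Fintype V] {u w z : V} (huz : u ≠ z) (hwz : w ≠ z)
    (hz : ¬ IsCutVertex G z) (hzw : G.dist u z ≤ G.dist u w) :
    G.dist u w + 2 ≤ Fintype.card V := by
  by_contra! hcard
  obtain ⟨f, hf, hdist⟩ := exists_injective_dist_eq (G := G) u w
  have hbij : Function.Bijective f := by
    have := Fintype.card_le_of_injective f hf
    exact (Fintype.bijective_iff_injective_and_card f).2 ⟨hf, by simp at this ⊢; omega⟩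
  have hinj : Function.Injective (G.dist u) := by
    intro x y hxy
    obtain ⟨i, rfl⟩ := hbij.2 x
    obtain ⟨j, rfl⟩ := hbij.2 y
    rw [hdist, hdist] at hxy
    exact congrArg f (Fin.ext hxy)
  refine hz (isCutVertex_of_separates huz hwz fun W => ?_)
  obtain ⟨x, hx, hxz⟩ := exists_mem_support_dist_eq u W (by simp) hzw
  exact hinj hxz ▸ hx

end SimpleGraph

-- `ε(P_{d+1})`: the vertex at position `j` of the path has eccentricity `max j (d - j)`.
def pathTotalEcc (d : ℕ) : ℕ := ∑ j ∈ Finset.range (d + 1), max j (d - j)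

lemma pathTotalEcc_add_le_succ (d : ℕ) : pathTotalEcc d + (d + 1) ≤ pathTotalEcc (d + 1) := by
  rw [pathTotalEcc, pathTotalEcc, Finset.sum_range_succ _ (d + 1)]
  gcongr with j hj
  · simp
  · omega

lemma pathTotalEcc_add_two (d : ℕ) : pathTotalEcc (d + 2) = pathTotalEcc d + 3 * d + 5 := by
  rw [pathTotalEcc, Finset.sum_range_succ', Finset.sum_range_succ, pathTotalEcc,
    Finset.sum_congr rfl fun j hj => show max (j + 1) (d + 2 - (j + 1)) = max j (d - j) + 1 by
      simp at hj; omega, Finset.sum_add_distrib]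
  simp
  omega

lemma four_mul_pathTotalEcc : ∀ d, 4 * pathTotalEcc d = 3 * d ^ 2 + 4 * d + d % 2
  | 0 => by simp [pathTotalEcc]
  | 1 => by simp [pathTotalEcc, Finset.sum_range_succ]
  | d + 2 => by
    have := four_mul_pathTotalEcc d
    rw [pathTotalEcc_add_two]
    ring_nf at this ⊢
    omega

lemma pathTotalEcc_add_mul_le {n d : ℕ} (hd : d + 2 ≤ n) :
    pathTotalEcc d + (n - (d + 1)) * d ≤ pathTotalEcc (n - 2) + (n - 2) := by
  obtain ⟨k, rfl⟩ := Nat.exists_eq_add_of_le hd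
  induction k generalizing d with
  | zero => simp
  | succ k ih =>
    have hstep := ih (d := d + 1) (by omega)
    have hsucc := pathTotalEcc_add_le_succ d
    rw [show d + 1 + 2 + k = d + 2 + (k + 1) by omega,
      show d + 2 + (k + 1) - (d + 1 + 1) = k + 1 by omega] at hstep
    rw [show d + 2 + (k + 1) - (d + 1) = k + 2 by omega]
    nlinarith

lemma pathTotalEcc_sub_two_add_sub_two {n : ℕ} (hn : 2 ≤ n) :
    pathTotalEcc (n - 2) + (n - 2) = (3 * n ^ 2 - 4 * n - 3) / 4 := by
  obtain ⟨k, rfl⟩ := Nat.exists_eq_add_of_le' hn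
  have := four_mul_pathTotalEcc k
  obtain ⟨m, rfl | rfl⟩ := Nat.even_or_odd' k <;>
  · simp only [Nat.add_sub_cancel] at *
    ring_nf at *
    omega

namespace SimpleGraph

variable {V : Type*} {G : SimpleGraph V}

theorem totalEcc_le_of_ecc_le [Fintype V] (u w : V)
    (hecc : ∀ v, ecc G v ≤ max (G.dist u v) (G.dist u w - G.dist u v)) :
    totalEcc G ≤ pathTotalEcc (G.dist u w) +
      (Fintype.card V - (G.dist u w + 1)) * G.dist u w := by
  classical
  have hD (v : V) : ecc G v ≤ G.dist u w := by
    have := dist_le_ecc (G := G) u v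
    have := hecc u
    have := hecc v
    simp only [dist_self] at *
    omega
  obtain ⟨f, hf, hdist⟩ := exists_injective_dist_eq (G := G) u w
  set s := Finset.univ.image f
  have hlevels : ∑ v ∈ s, ecc G v ≤ pathTotalEcc (G.dist u w) := by
    rw [Finset.sum_image hf.injOn, pathTotalEcc, ← Fin.sum_univ_eq_sum_range]
    exact Finset.sum_le_sum fun j _ => by simpa [hdist] using hecc (f j)
  have hrest : ∑ v ∈ Finset.univ \ s, ecc G v ≤
      (Fintype.card V - (G.dist u w + 1)) * G.dist u w := by
    calc ∑ v ∈ Finset.univ \ s, ecc G v ≤ (Finset.univ \ s).card • G.dist u w :=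
          Finset.sum_le_card_nsmul _ _ _ fun v _ => hD v
      _ = _ := by
        rw [Finset.card_univ_sdiff, Finset.card_image_of_injective _ hf, smul_eq_mul]
        simp
  rw [totalEcc, ← Finset.sum_sdiff (Finset.subset_univ s)]
  omega

lemma exists_perm_dist_le (G : SimpleGraph V) {x y z : V} (hxy : x ≠ y) (hxz : x ≠ z)
    (hyz : y ≠ z) :
    ∃ u w t, u ≠ t ∧ w ≠ t ∧ (∀ s, s = u ∨ s = w ∨ s = t ↔ s = x ∨ s = y ∨ s = z) ∧
      G.dist u t ≤ G.dist u w ∧ G.dist w t ≤ G.dist u t := by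
  have := G.dist_comm (u := x) (v := y)
  have := G.dist_comm (u := x) (v := z)
  have := G.dist_comm (u := y) (v := z)
  rcases le_total (G.dist x y) (G.dist x z) with h₁ | h₁ <;>
  rcases le_total (G.dist x y) (G.dist y z) with h₂ | h₂ <;>
  rcases le_total (G.dist x z) (G.dist y z) with h₃ | h₃ <;>
  first
  | exact ⟨x, y, z, hxz, hyz, fun s => by tauto, by omega, by omega⟩
  | exact ⟨y, x, z, hyz, hxz, fun s => by tauto, by omega, by omega⟩
  | exact ⟨x, z, y, hxy, hyz.symm, fun s => by tauto, by omega, by omega⟩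
  | exact ⟨z, x, y, hyz.symm, hxy, fun s => by tauto, by omega, by omega⟩
  | exact ⟨y, z, x, hxy.symm, hxz.symm, fun s => by tauto, by omega, by omega⟩
  | exact ⟨z, y, x, hxz.symm, hxy.symm, fun s => by tauto, by omega, by omega⟩

theorem totalEcc_le_of_not_isCutVertex_iff [Fintype V] (hG : G.Connected) {x y z : V}
    (hxy : x ≠ y) (hxz : x ≠ z) (hyz : y ≠ z)
    (hnoncut : ∀ t, ¬ IsCutVertex G t ↔ t = x ∨ t = y ∨ t = z) :
    totalEcc G ≤ pathTotalEcc (Fintype.card V - 2) + (Fintype.card V - 2) := by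
  obtain ⟨u, w, t, hut, hwt, hperm, hd₁, hd₂⟩ := G.exists_perm_dist_le hxy hxz hyz
  have hnoncut' (s : V) : ¬ IsCutVertex G s ↔ s = u ∨ s = w ∨ s = t :=
    (hnoncut s).trans (hperm s).symm
  have hD := dist_add_two_le_card hut hwt ((hnoncut' t).2 (Or.inr (Or.inr rfl))) hd₁
  exact (totalEcc_le_of_ecc_le u w (ecc_le_max_dist hG hnoncut' hd₁ hd₂)).trans
    (pathTotalEcc_add_mul_le hD)

end SimpleGraph

lemma exists_three_of_ncard_eq_card_sub_three {V : Type*} [Fintype V] {p : V → Prop}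
    (h3 : 3 ≤ Fintype.card V) (hp : {v | p v}.ncard = Fintype.card V - 3) :
    ∃ x y z, x ≠ y ∧ x ≠ z ∧ y ≠ z ∧ ∀ t, ¬ p t ↔ t = x ∨ t = y ∨ t = z := by
  have hcompl := Set.ncard_add_ncard_compl {v | p v}
  rw [Nat.card_eq_fintype_card, hp, show {v | p v}ᶜ = {v | ¬ p v} from rfl] at hcompl
  obtain ⟨x, y, z, hxy, hxz, hyz, hxyz⟩ :=
    Set.ncard_eq_three.1 (show {v | ¬ p v}.ncard = 3 by omega)
  exact ⟨x, y, z, hxy, hxz, hyz, fun t => by simpa using Set.ext_iff.1 hxyz t⟩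

section UnlGraph

open SimpleGraph

variable {n k j : ℕ}

-- The path `inl 0, …, inl (n - 4), inr 0, inr 1` of `U_{n,3}^l`; only `inr 2` lies off it.
def unlSpine (n k : ℕ) : Fin (n - 3) ⊕ Fin 3 :=
  if h : k < n - 3 then .inl ⟨k, h⟩ else if k = n - 3 then .inr 0 else .inr 1

-- `d(inl 0, ·)`, a potential that grows by at most one along an edge.
def unlHeight (n : ℕ) : Fin (n - 3) ⊕ Fin 3 → ℕ :=
  Sum.elim (↑) fun t => if t = 0 then n - 3 else n - 2

lemma unlSpine_val (i : Fin (n - 3)) : unlSpine n i = .inl i := by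
  simp [unlSpine]

lemma unlSpine_sub_three : unlSpine n (n - 3) = .inr 0 := by
  simp [unlSpine]

lemma unlSpine_sub_two (hn : 3 ≤ n) : unlSpine n (n - 2) = .inr 1 := by
  rw [unlSpine, dif_neg (by omega), if_neg (by omega)]

lemma unlSpine_or_eq_inr_two (hn : 3 ≤ n) (b : Fin (n - 3) ⊕ Fin 3) :
    (∃ k ≤ n - 2, unlSpine n k = b) ∨ b = .inr 2 := by
  rcases b with i | t
  · exact Or.inl ⟨i, by omega, unlSpine_val i⟩
  · fin_cases t
    · exact Or.inl ⟨n - 3, by omega, unlSpine_sub_three⟩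
    · exact Or.inl ⟨n - 2, le_rfl, unlSpine_sub_two hn⟩
    · exact Or.inr rfl

lemma unlHeight_unlSpine (hk : k ≤ n - 2) : unlHeight n (unlSpine n k) = k := by
  unfold unlSpine
  split_ifs <;> simp [unlHeight] <;> omega

lemma unlGraph_adj_unlSpine (hk : k + 1 ≤ n - 2) :
    (UnlGraph n 3).Adj (unlSpine n k) (unlSpine n (k + 1)) := by
  unfold unlSpine
  split_ifs <;> simp [UnlGraph] <;> omega

lemma unlGraph_adj_inr_two_inr_zero : (UnlGraph n 3).Adj (.inr 2) (.inr 0) := by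
  simp [UnlGraph]

lemma unlHeight_le_of_adj {a b : Fin (n - 3) ⊕ Fin 3} (h : (UnlGraph n 3).Adj a b) :
    unlHeight n b ≤ unlHeight n a + 1 := by
  rcases a with i | s <;> rcases b with j | t
  all_goals simp [UnlGraph, unlHeight] at h ⊢
  all_goals first | omega | (split_ifs <;> simp_all <;> omega)

lemma unlGraph_reachable_unlSpine_zero (hk : k ≤ n - 2) :
    (UnlGraph n 3).Reachable (unlSpine n 0) (unlSpine n k) :=
  (exists_walk_length_eq_of_adj_succ (unlSpine n) k.zero_le fun _ _ hi =>
    unlGraph_adj_unlSpine (by omega)).elim fun W _ => ⟨W⟩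

lemma unlGraph_connected (hn : 3 ≤ n) : (UnlGraph n 3).Connected := by
  refine (connected_iff_exists_forall_reachable _).2 ⟨unlSpine n 0, fun b => ?_⟩
  rcases unlSpine_or_eq_inr_two hn b with ⟨k, hk, rfl⟩ | rfl
  · exact unlGraph_reachable_unlSpine_zero hk
  · exact (unlSpine_sub_three (n := n) ▸ unlGraph_reachable_unlSpine_zero (by omega)).trans
      unlGraph_adj_inr_two_inr_zero.symm.reachable

lemma dist_unlSpine_le (hk : k ≤ n - 2) (hj : j ≤ n - 2) :
    (UnlGraph n 3).dist (unlSpine n k) (unlSpine n j) ≤ k - j + (j - k) := by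
  have hdist {i l : ℕ} (hil : i ≤ l) (hl : l ≤ n - 2) :
      (UnlGraph n 3).dist (unlSpine n i) (unlSpine n l) ≤ l - i :=
    (exists_walk_length_eq_of_adj_succ (unlSpine n) hil fun _ _ hm =>
      unlGraph_adj_unlSpine (by omega)).elim fun W hW => hW ▸ dist_le W
  rcases le_total k j with hkj | hjk
  · have := hdist hkj hj
    omega
  · have := hdist hjk hk
    rw [dist_comm] at this
    omega

lemma dist_unlSpine_inr_two_le (hn : 4 ≤ n) (hk : k ≤ n - 2) :
    (UnlGraph n 3).dist (unlSpine n k) (.inr 2) ≤ max k (n - 2 - k) := by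
  have h₁ := dist_unlSpine_le (j := n - 3) hk (by omega)
  have h₂ : (UnlGraph n 3).dist (unlSpine n (n - 3)) (.inr 2) = 1 := by
    rw [unlSpine_sub_three, dist_eq_one_iff_adj]
    exact unlGraph_adj_inr_two_inr_zero.symm
  have := (unlGraph_connected (n := n) (by omega)).dist_triangle
    (u := unlSpine n k) (v := unlSpine n (n - 3)) (w := .inr 2)
  omega

lemma ecc_unlSpine (hn : 4 ≤ n) (hk : k ≤ n - 2) :
    ecc (UnlGraph n 3) (unlSpine n k) = max k (n - 2 - k) := by
  have hG := unlGraph_connected (n := n) (by omega)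
  apply le_antisymm
  · refine ecc_le_of_forall_dist_le fun b => ?_
    rcases unlSpine_or_eq_inr_two (by omega) b with ⟨j, hj, rfl⟩ | rfl
    · have := dist_unlSpine_le hk hj
      omega
    · exact dist_unlSpine_inr_two_le hn hk
  · have h₀ := apply_le_apply_add_dist (unlHeight n) (fun _ _ => unlHeight_le_of_adj)
      (hG (unlSpine n 0) (unlSpine n k))
    have h₁ := apply_le_apply_add_dist (unlHeight n) (fun _ _ => unlHeight_le_of_adj)
      (hG (unlSpine n k) (unlSpine n (n - 2)))
    rw [unlHeight_unlSpine (k := 0) (by omega), unlHeight_unlSpine hk] at h₀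
    rw [unlHeight_unlSpine le_rfl, unlHeight_unlSpine hk] at h₁
    have := dist_le_ecc (G := UnlGraph n 3) (unlSpine n k) (unlSpine n 0)
    have := dist_le_ecc (G := UnlGraph n 3) (unlSpine n k) (unlSpine n (n - 2))
    rw [dist_comm] at h₀
    omega

lemma ecc_unlGraph_inr_two (hn : 4 ≤ n) : ecc (UnlGraph n 3) (.inr 2) = n - 2 := by
  have hG := unlGraph_connected (n := n) (by omega)
  apply le_antisymm
  · refine ecc_le_of_forall_dist_le fun b => ?_
    rcases unlSpine_or_eq_inr_two (by omega) b with ⟨j, hj, rfl⟩ | rfl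
    · have := dist_unlSpine_inr_two_le hn hj
      rw [dist_comm]
      omega
    · simp
  · have h₀ := apply_le_apply_add_dist (unlHeight n) (fun _ _ => unlHeight_le_of_adj)
      (hG (unlSpine n 0) (.inr 2))
    have hheight : unlHeight n (.inr 2) = n - 2 := by simp [unlHeight]
    rw [unlHeight_unlSpine (k := 0) (by omega), hheight, dist_comm] at h₀
    have := dist_le_ecc (G := UnlGraph n 3) (.inr 2) (unlSpine n 0)
    omega

theorem totalEcc_unlGraph_three (hn : 4 ≤ n) :
    totalEcc (UnlGraph n 3) = pathTotalEcc (n - 2) + (n - 2) := by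
  have hspine : ∑ k ∈ Finset.range (n - 1), ecc (UnlGraph n 3) (unlSpine n k) =
      pathTotalEcc (n - 2) := by
    rw [pathTotalEcc, show n - 1 = n - 2 + 1 by omega]
    exact Finset.sum_congr rfl fun k hk => ecc_unlSpine hn (by simp at hk; omega)
  rw [totalEcc, Fintype.sum_sum_type, Fin.sum_univ_three, ecc_unlGraph_inr_two hn, ← hspine,
    show n - 1 = n - 3 + 1 + 1 by omega, Finset.sum_range_succ, Finset.sum_range_succ,
    ← Fin.sum_univ_eq_sum_range, show n - 3 + 1 = n - 2 by omega, unlSpine_sub_three,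
    unlSpine_sub_two (by omega)]
  simp only [unlSpine_val]
  ring

end UnlGraph

theorem stmt19 {V : Type*} [Fintype V] (G : SimpleGraph V) (hG : G.Connected)
    (n : ℕ) (hn : 5 ≤ n) (hcard : Fintype.card V = n)
    (hcut : {w | IsCutVertex G w}.ncard = n - 3) :
    totalEcc G ≤ totalEcc (UnlGraph n 3) ∧
    totalEcc (UnlGraph n 3) = (3 * n ^ 2 - 4 * n - 3) / 4 := by
  subst hcard
  obtain ⟨x, y, z, hxy, hxz, hyz, hnoncut⟩ :=
    exists_three_of_ncard_eq_card_sub_three (by omega) hcut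
  rw [totalEcc_unlGraph_three (by omega)]
  exact ⟨totalEcc_le_of_not_isCutVertex_iff hG hxy hxz hyz hnoncut,
    pathTotalEcc_sub_two_add_sub_two (by omega)⟩
end
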